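/- arXiv:1804.07203 — 3 statements merged into one kernel-verified Lean document; each statement's English description precedes it below -/
import Mathlib

section
/- Let 𝒫 be a family of distributions for a real random variable ζ with i.i.d. copies ζ_1, ζ_2, …, and set S_n = n^{-1} ∑_{i=1}^n ζ_i. Suppose for all P ∈ 𝒫 that 𝔼_P[ζ] = 0 and 𝔼_P[|ζ|^{1+η}] < c for some fixed η, c > 0. Then for all ε > 0, lim_{n→∞} sup_{P∈𝒫} P(|S_n| > ε) = 0. -/
/-!
Truncate at a level `M`: `ζ = Y + Z` with `Y = ζ 𝟙{|ζ| ≤ M}`. By Chebyshev, the sample mean of the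
`Y`s deviates from `𝔼 Y` with probability `O(M² / n)`; by Markov, the sample mean of the tails `Z`
is small outside probability `O(𝔼|Z|) = O(c / M^η)`, and `|𝔼 Y| = |𝔼 Z|` since `𝔼 ζ = 0`. Both
bounds depend on `P` only through `c`, and `M = n^(1/4)` sends both to zero.
-/

open MeasureTheory ProbabilityTheory Filter Topology

lemma abs_sub_truncation_le {α : Type*} (f : α → ℝ) {M η : ℝ} (hM : 0 < M) (hη : 0 ≤ η)
    (x : α) : |f x - truncation f M x| ≤ |f x| ^ (1 + η) / M ^ η := by
  by_cases hx : f x ∈ Set.Ioc (-M) M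
  · simp only [truncation, Function.comp_apply, Set.indicator_of_mem hx, id, sub_self, abs_zero]
    positivity
  · have hMx : M ≤ |f x| := by
      by_contra! h
      exact hx ⟨(abs_lt.1 h).1, (abs_lt.1 h).2.le⟩
    have hfx : 0 < |f x| := hM.trans_le hMx
    simp only [truncation, Function.comp_apply, Set.indicator_of_notMem hx, sub_zero]
    rw [le_div_iff₀ (by positivity), Real.rpow_one_add' hfx.le (by positivity)]
    gcongr

lemma integral_abs_sub_truncation_le {α : Type*} [MeasurableSpace α] {μ : Measure α}
    {f : α → ℝ} {M η : ℝ} (hM : 0 < M) (hη : 0 ≤ η)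
    (hint : Integrable (fun x => |f x| ^ (1 + η)) μ) :
    ∫ x, |f x - truncation f M x| ∂μ ≤ (∫ x, |f x| ^ (1 + η) ∂μ) / M ^ η := by
  rw [← integral_div]
  exact integral_mono_of_nonneg (.of_forall fun x => abs_nonneg _) (hint.div_const _)
    (.of_forall (abs_sub_truncation_le f hM hη))

lemma variance_truncation_le {α : Type*} [MeasurableSpace α] {μ : Measure α}
    [IsProbabilityMeasure μ] {f : α → ℝ} (hf : AEStronglyMeasurable f μ) (M : ℝ) :
    variance (truncation f M) μ ≤ M ^ 2 := by
  have hbound : ∀ x, truncation f M x ∈ Set.Icc (-|M|) |M| := fun x =>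
    abs_le.1 (abs_truncation_le_bound f M x)
  calc variance (truncation f M) μ ≤ ((|M| - -|M|) / 2) ^ 2 :=
        variance_le_sq_of_bounded (.of_forall hbound) hf.truncation.aemeasurable
    _ = M ^ 2 := by rw [sub_neg_eq_add, add_self_div_two, sq_abs]

lemma abs_integral_truncation_le {α : Type*} [MeasurableSpace α] {μ : Measure α}
    [IsFiniteMeasure μ] {f : α → ℝ} (hf : Integrable f μ) (hmean : ∫ x, f x ∂μ = 0) (M : ℝ) :
    |∫ x, truncation f M x ∂μ| ≤ ∫ x, |f x - truncation f M x| ∂μ := by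
  rw [← abs_neg, ← zero_sub, ← hmean, ← integral_sub hf hf.1.integrable_truncation]
  exact abs_integral_le_integral_abs

lemma integrable_of_integrable_abs_rpow {α : Type*} [MeasurableSpace α] {μ : Measure α}
    [IsFiniteMeasure μ] {f : α → ℝ} (hf : AEStronglyMeasurable f μ) {p : ℝ} (hp : 1 ≤ p)
    (hint : Integrable (fun x => |f x| ^ p) μ) : Integrable f μ := by
  have := integrable_norm_rpow_of_le hf zero_le_one (zero_le_one.trans hp) hp
    (by simpa only [Real.norm_eq_abs] using hint)
  simpa only [Real.rpow_one, integrable_norm_iff hf] using this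

lemma measureReal_abs_add_gt_le {α : Type*} [MeasurableSpace α] (μ : Measure α)
    [IsFiniteMeasure μ] (f g : α → ℝ) (ε : ℝ) :
    μ.real {x | ε < |f x + g x|} ≤ μ.real {x | ε / 2 ≤ |f x|} + μ.real {x | ε / 2 ≤ |g x|} := by
  refine (measureReal_mono fun x (hx : ε < |f x + g x|) => ?_).trans (measureReal_union_le _ _)
  by_contra! h
  have hf : |f x| < ε / 2 := not_le.1 fun h' => h (Or.inl h')
  have hg : |g x| < ε / 2 := not_le.1 fun h' => h (Or.inr h')
  linarith [abs_add_le (f x) (g x)]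

lemma measureReal_abs_ge_le_integral_abs_div {α : Type*} [MeasurableSpace α] {μ : Measure α}
    {f : α → ℝ} (hf : Integrable f μ) {ε : ℝ} (hε : 0 < ε) :
    μ.real {x | ε ≤ |f x|} ≤ (∫ x, |f x| ∂μ) / ε := by
  rw [le_div_iff₀' hε]
  exact mul_meas_ge_le_integral_of_nonneg (.of_forall fun x => abs_nonneg _) hf.abs ε

noncomputable def sampleMean {Ω : Type*} (X : ℕ → Ω → ℝ) (n : ℕ) (ω : Ω) : ℝ :=
  (n : ℝ)⁻¹ * ∑ j ∈ Finset.range n, X j ω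

section SampleMean

variable {Ω : Type*}

lemma sampleMean_sub (X Y : ℕ → Ω → ℝ) (n : ℕ) (ω : Ω) :
    sampleMean (fun j ω => X j ω - Y j ω) n ω = sampleMean X n ω - sampleMean Y n ω := by
  simp only [sampleMean, Finset.sum_sub_distrib, mul_sub]

lemma sampleMean_eq_smul_sum (X : ℕ → Ω → ℝ) (n : ℕ) :
    sampleMean X n = (n : ℝ)⁻¹ • ∑ j ∈ Finset.range n, X j := by
  ext ω
  simp [sampleMean]

variable [MeasurableSpace Ω] {μ : Measure Ω} {X : ℕ → Ω → ℝ} {n : ℕ}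

lemma integrable_sampleMean (hX : ∀ j, Integrable (X j) μ) (n : ℕ) :
    Integrable (sampleMean X n) μ :=
  (integrable_finsetSum _ fun j _ => hX j).const_mul _

lemma memLp_sampleMean {p : ENNReal} (hX : ∀ j, MemLp (X j) p μ) (n : ℕ) :
    MemLp (sampleMean X n) p μ := by
  rw [sampleMean_eq_smul_sum]
  exact (memLp_finsetSum' _ fun j _ => hX j).const_smul _

lemma integral_sampleMean (hX : ∀ j, Integrable (X j) μ)
    (hident : ∀ j, IdentDistrib (X j) (X 0) μ μ) (hn : n ≠ 0) :
    ∫ ω, sampleMean X n ω ∂μ = ∫ ω, X 0 ω ∂μ := by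
  simp only [sampleMean, integral_const_mul, integral_finsetSum _ fun j _ => hX j,
    fun j => (hident j).integral_eq, Finset.sum_const, Finset.card_range, nsmul_eq_mul]
  field_simp

lemma integral_abs_sampleMean_le (hX : ∀ j, Integrable (X j) μ)
    (hident : ∀ j, IdentDistrib (X j) (X 0) μ μ) (n : ℕ) :
    ∫ ω, |sampleMean X n ω| ∂μ ≤ ∫ ω, |X 0 ω| ∂μ := by
  calc ∫ ω, |sampleMean X n ω| ∂μ ≤ ∫ ω, sampleMean (fun j ω => |X j ω|) n ω ∂μ := by
        refine integral_mono (integrable_sampleMean hX n).abs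
          (integrable_sampleMean (fun j => (hX j).abs) n) fun ω => ?_
        rw [sampleMean, sampleMean, abs_mul, abs_inv, Nat.abs_cast]
        gcongr
        exact Finset.abs_sum_le_sum_abs _ _
    _ ≤ ∫ ω, |X 0 ω| ∂μ := by
        rcases eq_or_ne n 0 with rfl | hn
        · simp [sampleMean, integral_nonneg fun ω => abs_nonneg _]
        · exact (integral_sampleMean (fun j => (hX j).abs)
            (fun j => (hident j).comp measurable_abs) hn).le

lemma variance_sampleMean (hX : ∀ j, MemLp (X j) 2 μ) (hindep : iIndepFun X μ)
    (hident : ∀ j, IdentDistrib (X j) (X 0) μ μ) (n : ℕ) :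
    variance (sampleMean X n) μ = variance (X 0) μ / n := by
  rw [sampleMean_eq_smul_sum, variance_smul, IndepFun.variance_sum (fun j _ => hX j)
    fun j _ k _ hjk => hindep.indepFun hjk]
  simp only [fun j => (hident j).variance_eq, Finset.sum_const, Finset.card_range, nsmul_eq_mul]
  rcases eq_or_ne n 0 with rfl | hn
  · simp
  · field_simp

lemma measureReal_abs_sampleMean_sub_ge_le [IsFiniteMeasure μ] (hX : ∀ j, MemLp (X j) 2 μ)
    (hindep : iIndepFun X μ) (hident : ∀ j, IdentDistrib (X j) (X 0) μ μ) (hn : n ≠ 0)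
    {ε : ℝ} (hε : 0 < ε) :
    μ.real {ω | ε ≤ |sampleMean X n ω - ∫ ω, X 0 ω ∂μ|} ≤ variance (X 0) μ / (n * ε ^ 2) := by
  have := meas_ge_le_variance_div_sq (memLp_sampleMean hX n) hε
  rw [integral_sampleMean (fun j => (hX j).integrable one_le_two) hident hn,
    variance_sampleMean hX hindep hident, div_div] at this
  exact ENNReal.toReal_le_of_le_ofReal (div_nonneg (variance_nonneg _ _) (by positivity)) this

lemma measureReal_abs_sampleMean_add_ge_le [IsProbabilityMeasure μ]
    (hX : ∀ j, Integrable (X j) μ) (hident : ∀ j, IdentDistrib (X j) (X 0) μ μ) (a : ℝ)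
    {ε : ℝ} (hε : 0 < ε) :
    μ.real {ω | ε ≤ |sampleMean X n ω + a|} ≤ (∫ ω, |X 0 ω| ∂μ + |a|) / ε := by
  have hS := integrable_sampleMean hX n
  refine (measureReal_abs_ge_le_integral_abs_div (hS.add (integrable_const a)) hε).trans ?_
  gcongr
  calc ∫ ω, |sampleMean X n ω + a| ∂μ ≤ ∫ ω, (|sampleMean X n ω| + |a|) ∂μ :=
        integral_mono (hS.add (integrable_const a)).abs (hS.abs.add (integrable_const _))
          fun ω => abs_add_le _ _
    _ = ∫ ω, |sampleMean X n ω| ∂μ + |a| := by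
        rw [integral_add hS.abs (integrable_const _), integral_const, probReal_univ, one_smul]
    _ ≤ ∫ ω, |X 0 ω| ∂μ + |a| := by linarith [integral_abs_sampleMean_le hX hident n]

theorem measureReal_abs_sampleMean_gt_le [IsProbabilityMeasure μ] (hindep : iIndepFun X μ)
    (hident : ∀ j, IdentDistrib (X j) (X 0) μ μ) {η c : ℝ} (hη : 0 < η)
    (hmomInt : Integrable (fun ω => |X 0 ω| ^ (1 + η)) μ)
    (hmom : ∫ ω, |X 0 ω| ^ (1 + η) ∂μ ≤ c) (hmean : ∫ ω, X 0 ω ∂μ = 0)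
    {ε M : ℝ} (hε : 0 < ε) (hM : 0 < M) (hn : n ≠ 0) :
    μ.real {ω | ε < |sampleMean X n ω|} ≤ 4 / ε ^ 2 * (M ^ 2 / n) + 4 * c / ε / M ^ η := by
  set Y : ℕ → Ω → ℝ := fun j => truncation (X j) M
  set Z : ℕ → Ω → ℝ := fun j ω => X j ω - Y j ω
  set m := ∫ ω, Y 0 ω ∂μ
  have hXmeas : ∀ j, AEStronglyMeasurable (X j) μ :=
    fun j => (hident j).aemeasurable_fst.aestronglyMeasurable
  have hXint : ∀ j, Integrable (X j) μ := fun j => (hident j).integrable_iff.2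
    (integrable_of_integrable_abs_rpow (hXmeas 0) (by linarith) hmomInt)
  have hYmem : ∀ j, MemLp (Y j) 2 μ := fun j => (hXmeas j).memLp_truncation
  have hYindep : iIndepFun Y μ :=
    hindep.comp _ fun _ => measurable_id.indicator measurableSet_Ioc
  have hYident : ∀ j, IdentDistrib (Y j) (Y 0) μ μ := fun j => (hident j).truncation
  have hZint : ∀ j, Integrable (Z j) μ := fun j => (hXint j).sub ((hYmem j).integrable one_le_two)
  have hZident : ∀ j, IdentDistrib (Z j) (Z 0) μ μ := fun j =>
    (hident j).comp (measurable_id.sub (measurable_id.indicator measurableSet_Ioc))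
  have hZ : ∫ ω, |Z 0 ω| ∂μ ≤ c / M ^ η :=
    (integral_abs_sub_truncation_le hM hη.le hmomInt).trans (by gcongr)
  have hm : |m| ≤ c / M ^ η := (abs_integral_truncation_le (hXint 0) hmean M).trans hZ
  have hsplit : ∀ ω, sampleMean X n ω = (sampleMean Y n ω - m) + (sampleMean Z n ω + m) := by
    intro ω
    rw [sampleMean_sub]
    ring
  have hε2 : 0 < ε / 2 := half_pos hε
  calc μ.real {ω | ε < |sampleMean X n ω|}
      = μ.real {ω | ε < |(sampleMean Y n ω - m) + (sampleMean Z n ω + m)|} := by simp_rw [← hsplit]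
    _ ≤ μ.real {ω | ε / 2 ≤ |sampleMean Y n ω - m|}
          + μ.real {ω | ε / 2 ≤ |sampleMean Z n ω + m|} := measureReal_abs_add_gt_le μ _ _ ε
    _ ≤ variance (Y 0) μ / (n * (ε / 2) ^ 2) + (∫ ω, |Z 0 ω| ∂μ + |m|) / (ε / 2) :=
        add_le_add (measureReal_abs_sampleMean_sub_ge_le hYmem hYindep hYident hn hε2)
          (measureReal_abs_sampleMean_add_ge_le hZint hZident m hε2)
    _ ≤ M ^ 2 / (n * (ε / 2) ^ 2) + (c / M ^ η + c / M ^ η) / (ε / 2) := by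
        gcongr
        exact variance_truncation_le (hXmeas 0) M
    _ = 4 / ε ^ 2 * (M ^ 2 / n) + 4 * c / ε / M ^ η := by
        field_simp
        ring

end SampleMean

lemma tendsto_truncation_bound {η : ℝ} (hη : 0 < η) (a b : ℝ) :
    Tendsto (fun n : ℕ => a * (((n : ℝ) ^ (4⁻¹ : ℝ)) ^ 2 / n) + b / ((n : ℝ) ^ (4⁻¹ : ℝ)) ^ η)
      atTop (𝓝 0) := by
  have h1 : Tendsto (fun n : ℕ => ((n : ℝ) ^ (4⁻¹ : ℝ)) ^ 2 / n) atTop (𝓝 0) := by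
    refine ((tendsto_rpow_neg_atTop (by norm_num : (0 : ℝ) < 2⁻¹)).comp
      tendsto_natCast_atTop_atTop).congr' ?_
    filter_upwards [eventually_gt_atTop 0] with n hn
    rw [Function.comp_apply, ← Real.rpow_natCast, ← Real.rpow_mul (Nat.cast_nonneg n),
      ← Real.rpow_sub_one (by positivity)]
    norm_num
  have h2 : Tendsto (fun n : ℕ => ((n : ℝ) ^ (4⁻¹ : ℝ)) ^ η) atTop atTop :=
    (tendsto_rpow_atTop hη).comp
      ((tendsto_rpow_atTop (by norm_num)).comp tendsto_natCast_atTop_atTop)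
  simpa using (h1.const_mul a).add (tendsto_const_nhds.div_atTop h2)

theorem uniform_weak_law_of_large_numbers_general
    {Ω : Type*} [MeasurableSpace Ω] {ι : Type*}
    (P : ι → Measure Ω) (hP : ∀ i, IsProbabilityMeasure (P i))
    (ζ : ℕ → Ω → ℝ)
    (hindep : ∀ i, iIndepFun ζ (P i))
    (hident : ∀ i j, IdentDistrib (ζ j) (ζ 0) (P i) (P i))
    (η c : ℝ) (hη : 0 < η) (hc : 0 < c)
    (hmom : ∀ i, ∫ ω, |ζ 0 ω| ^ (1 + η) ∂(P i) < c)
    (hmomInt : ∀ i, Integrable (fun ω => |ζ 0 ω| ^ (1 + η)) (P i))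
    (hmean : ∀ i, ∫ ω, ζ 0 ω ∂(P i) = 0) :
    ∀ ε > 0,
      Tendsto (fun n : ℕ => ⨆ i,
          ((P i) {ω | ε < |(n : ℝ)⁻¹ * ∑ j ∈ Finset.range n, ζ j ω|}).toReal)
        atTop (nhds 0) := by
  intro ε hε
  refine squeeze_zero' (.of_forall fun n => Real.iSup_nonneg fun i => ENNReal.toReal_nonneg) ?_
    (tendsto_truncation_bound hη (4 / ε ^ 2) (4 * c / ε))
  filter_upwards [eventually_ne_atTop 0] with n hn
  have hM : 0 < (n : ℝ) ^ (4⁻¹ : ℝ) := by positivity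
  refine Real.iSup_le (fun i => ?_) (by positivity)
  have := hP i
  exact measureReal_abs_sampleMean_gt_le (hindep i) (hident i) hη (hmomInt i) (hmom i).le
    (hmean i) hε hM hn

/-- Uniform weak law of large numbers over a family of
distributions with mean zero and uniformly bounded `(1+η)`-th absolute
moments. -/
theorem uniform_weak_law_of_large_numbers
    {Ω : Type*} [MeasurableSpace Ω] {ι : Type*}
    (P : ι → Measure Ω) (hP : ∀ i, IsProbabilityMeasure (P i))
    (ζ : ℕ → Ω → ℝ) (hmeas : ∀ j, Measurable (ζ j))
    (hindep : ∀ i, iIndepFun ζ (P i))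
    (hident : ∀ i j, IdentDistrib (ζ j) (ζ 0) (P i) (P i))
    (η c : ℝ) (hη : 0 < η) (hc : 0 < c)
    (hmom : ∀ i, ∫ ω, |ζ 0 ω| ^ (1 + η) ∂(P i) < c)
    (hmomInt : ∀ i, Integrable (fun ω => |ζ 0 ω| ^ (1 + η)) (P i))
    (hmean : ∀ i, ∫ ω, ζ 0 ω ∂(P i) = 0) :
    ∀ ε > 0,
      Tendsto (fun n : ℕ => ⨆ i,
          ((P i) {ω | ε < |(n : ℝ)⁻¹ * ∑ j ∈ Finset.range n, ζ j ω|}).toReal)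
        atTop (nhds 0) :=
  uniform_weak_law_of_large_numbers_general P hP ζ hindep hident η c hη hc hmom hmomInt hmean
end

section
/- Let 𝒫 be a family of distributions for sequences (V_n) and (W_n) of real random variables with sup_{P∈𝒫} sup_{t∈ℝ} |P(V_n ≤ t) − Φ(t)| → 0 and W_n − 1 → 0 uniformly in probability over 𝒫. Then sup_{P∈𝒫} sup_{t∈ℝ} |P(V_n / W_n ≤ t) − Φ(t)| → 0. -/
open MeasureTheory ProbabilityTheory Filter

/-- The standard Gaussian cumulative distribution function `Φ`. -/
noncomputable def stdGaussianCDF (t : ℝ) : ℝ :=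
  ((gaussianReal 0 1) (Set.Iic t)).toReal

/-! On the event `|W - 1| ≤ ε` with `ε < 1`, the event `{V / W ≤ t}` lies between
`{V ≤ t - |t| ε}` and `{V ≤ t + |t| ε}`. So `P(V / W ≤ t)` is within
`D + P(ε < |W - 1|) + (Φ(t + |t| ε) - Φ(t - |t| ε))` of `Φ t`, where `D` is the Kolmogorov
distance from the law of `V` to `Φ`. The last term is small uniformly in `t`: for bounded `t`
by uniform continuity of `Φ` on compacts, for large `|t|` because `Φ` is close to its limits
`0` and `1` on the whole interval `[t - |t| ε, t + |t| ε]`. -/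

open Set Topology

theorem ProbabilityTheory.continuous_cdf (μ : Measure ℝ) [IsProbabilityMeasure μ]
    [NullSingletonClass μ] : Continuous (cdf μ) := by
  refine continuous_iff_continuousAt.2 fun x => ?_
  rw [(monotone_cdf μ).continuousAt_iff_leftLim_eq_rightLim, StieltjesFunction.rightLim_eq]
  have h := (cdf μ).measure_singleton x
  rw [measure_cdf, measure_singleton, eq_comm, ENNReal.ofReal_eq_zero, sub_nonpos] at h
  exact le_antisymm ((monotone_cdf μ).leftLim_le le_rfl) h

theorem stdGaussianCDF_eq_cdf : stdGaussianCDF = cdf (gaussianReal 0 1) := by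
  ext t
  rw [cdf_eq_real, stdGaussianCDF, measureReal_def]

theorem Monotone.exists_relative_modulus_of_continuous {F : ℝ → ℝ} (hF : Monotone F)
    (hc : Continuous F) {a b : ℝ} (hbot : Tendsto F atBot (𝓝 a)) (htop : Tendsto F atTop (𝓝 b))
    {η : ℝ} (hη : 0 < η) :
    ∃ ε, 0 < ε ∧ ε < 1 ∧ ∀ t, F (t + |t| * ε) - F (t - |t| * ε) ≤ η := by
  obtain ⟨M, hM⟩ := eventually_atTop.1 (htop.eventually (lt_mem_nhds (sub_lt_self b hη)))
  obtain ⟨m, hm⟩ := eventually_atBot.1 (hbot.eventually (gt_mem_nhds (lt_add_of_pos_right a hη)))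
  obtain ⟨R, hR, hMR, hmR⟩ : ∃ R : ℝ, 0 < R ∧ M ≤ R ∧ -R ≤ m :=
    ⟨|M| + |m| + 1, by positivity, by linarith [le_abs_self M, abs_nonneg m],
      by linarith [neg_abs_le m, abs_nonneg M]⟩
  obtain ⟨δ, hδ, hUC⟩ := Metric.uniformContinuousOn_iff_le.1
    ((isCompact_Icc (a := -(3 * R)) (b := 3 * R)).uniformContinuousOn_of_continuous
      hc.continuousOn) η hη
  refine ⟨min (1 / 2) (δ / (4 * R)), by positivity, by linarith [min_le_left (1 / 2) (δ / (4 * R))],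
    fun t => ?_⟩
  set ε := min (1 / 2) (δ / (4 * R))
  have hε : ε ≤ 1 / 2 := min_le_left _ _
  have hεδ : ε ≤ δ / (4 * R) := min_le_right _ _
  have hε0 : 0 ≤ ε := by positivity
  rcases le_or_gt |t| (2 * R) with ht | ht
  · have hsmall : |t| * ε ≤ R := by nlinarith
    have hclose : dist (t + |t| * ε) (t - |t| * ε) ≤ δ := by
      rw [Real.dist_eq, add_sub_sub_cancel, abs_of_nonneg (by positivity)]
      nlinarith [mul_le_mul_of_nonneg_right ht hε0, (le_div_iff₀ (by positivity)).1 hεδ]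
    have ht' := abs_le.1 ht
    have hnn : 0 ≤ |t| * ε := by positivity
    have hx : t + |t| * ε ∈ Icc (-(3 * R)) (3 * R) := ⟨by linarith, by linarith⟩
    have hy : t - |t| * ε ∈ Icc (-(3 * R)) (3 * R) := ⟨by linarith, by linarith⟩
    exact (le_abs_self _).trans ((Real.dist_eq _ _).symm.trans_le (hUC _ hx _ hy hclose))
  · rcases le_or_gt 0 t with ht0 | ht0
    · rw [abs_of_nonneg ht0] at ht ⊢
      have := hM (t - t * ε) (by nlinarith)
      linarith [hF.ge_of_tendsto htop (t + t * ε)]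
    · rw [abs_of_neg ht0] at ht ⊢
      have := hm (t + -t * ε) (by nlinarith)
      linarith [hF.le_of_tendsto hbot (t - -t * ε)]

theorem abs_mul_sub_le_abs_mul {t w ε : ℝ} (hw : |w - 1| ≤ ε) : |t * w - t| ≤ |t| * ε := by
  rw [← mul_sub_one, abs_mul]
  exact mul_le_mul_of_nonneg_left hw (abs_nonneg t)

theorem le_add_abs_mul_of_div_le {v w t ε : ℝ} (hw : |w - 1| ≤ ε) (hε : ε < 1)
    (h : v / w ≤ t) : v ≤ t + |t| * ε := by
  have hw0 : 0 < w := by linarith [(abs_le.1 hw).1]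
  linarith [(div_le_iff₀ hw0).1 h, (abs_le.1 (abs_mul_sub_le_abs_mul (t := t) hw)).2]

theorem div_le_of_le_sub_abs_mul {v w t ε : ℝ} (hw : |w - 1| ≤ ε) (hε : ε < 1)
    (h : v ≤ t - |t| * ε) : v / w ≤ t := by
  have hw0 : 0 < w := by linarith [(abs_le.1 hw).1]
  rw [div_le_iff₀ hw0]
  linarith [(abs_le.1 (abs_mul_sub_le_abs_mul (t := t) hw)).1]

theorem abs_measureReal_div_le_sub_le {Ω : Type*} [MeasurableSpace Ω] (μ : Measure Ω)
    [IsFiniteMeasure μ] {F : ℝ → ℝ} (hF : Monotone F) {V W : Ω → ℝ} {D ε : ℝ} (hε0 : 0 ≤ ε)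
    (hε1 : ε < 1) (hV : ∀ s, |μ.real {ω | V ω ≤ s} - F s| ≤ D) (t : ℝ) :
    |μ.real {ω | V ω / W ω ≤ t} - F t|
      ≤ D + μ.real {ω | ε < |W ω - 1|} + (F (t + |t| * ε) - F (t - |t| * ε)) := by
  have hup : {ω | V ω / W ω ≤ t} ⊆ {ω | V ω ≤ t + |t| * ε} ∪ {ω | ε < |W ω - 1|} := by
    intro ω hω
    by_cases hW : ε < |W ω - 1|
    · exact Or.inr hW
    · exact Or.inl (le_add_abs_mul_of_div_le (not_lt.1 hW) hε1 hω)
  have hdown : {ω | V ω ≤ t - |t| * ε} ⊆ {ω | V ω / W ω ≤ t} ∪ {ω | ε < |W ω - 1|} := by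
    intro ω hω
    by_cases hW : ε < |W ω - 1|
    · exact Or.inr hW
    · exact Or.inl (div_le_of_le_sub_abs_mul (not_lt.1 hW) hε1 hω)
  have hμup := (measureReal_mono hup (measure_ne_top μ _)).trans (measureReal_union_le _ _)
  have hμdown := (measureReal_mono hdown (measure_ne_top μ _)).trans (measureReal_union_le _ _)
  have hnn : 0 ≤ |t| * ε := by positivity
  have hFup := hF (le_add_of_nonneg_right hnn : t ≤ t + |t| * ε)
  have hFdown := hF (sub_le_self t hnn)
  have hVup := abs_le.1 (hV (t + |t| * ε))
  have hVdown := abs_le.1 (hV (t - |t| * ε))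
  exact abs_le.2 ⟨by linarith [measureReal_nonneg (μ := μ) (s := {ω | ε < |W ω - 1|})], by linarith⟩

theorem tendsto_iSup_atTop_zero_iff {κ : Type*} {g : ℕ → κ → ℝ} {C : ℝ}
    (h0 : ∀ n k, 0 ≤ g n k) (hC : ∀ n k, g n k ≤ C) :
    Tendsto (fun n => ⨆ k, g n k) atTop (𝓝 0) ↔ ∀ δ > 0, ∀ᶠ n in atTop, ∀ k, g n k ≤ δ := by
  refine ⟨fun h δ hδ => (h.eventually_lt_const hδ).mono fun n hn k =>
    ((le_ciSup ⟨C, forall_mem_range.2 (hC n)⟩ k).trans_lt hn).le, fun h => ?_⟩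
  refine tendsto_order.2 ⟨fun a ha => Eventually.of_forall fun n =>
    ha.trans_le (Real.iSup_nonneg (h0 n)), fun a ha => ?_⟩
  filter_upwards [h (a / 2) (half_pos ha)] with n hn
  exact (Real.iSup_le hn (half_pos ha).le).trans_lt (half_lt_self ha)

theorem tendsto_iSup_iSup_atTop_zero_iff {κ τ : Type*} {g : ℕ → κ → τ → ℝ} {C : ℝ}
    (h0 : ∀ n k s, 0 ≤ g n k s) (hC : ∀ n k s, g n k s ≤ C) :
    Tendsto (fun n => ⨆ k, ⨆ s, g n k s) atTop (𝓝 0) ↔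
      ∀ δ > 0, ∀ᶠ n in atTop, ∀ k s, g n k s ≤ δ := by
  rw [tendsto_iSup_atTop_zero_iff (C := |C|) (fun n k => Real.iSup_nonneg (h0 n k))
    (fun n k => Real.iSup_le (fun s => (hC n k s).trans (le_abs_self C)) (abs_nonneg C))]
  refine forall₂_congr fun δ hδ => eventually_congr (Eventually.of_forall fun n => ?_)
  refine forall_congr' fun k => ⟨fun h s => (le_ciSup ⟨C, forall_mem_range.2 (hC n k)⟩ s).trans h,
    fun h => Real.iSup_le h hδ.le⟩

theorem uniform_slutsky_div_general
    {Ω : Type*} [MeasurableSpace Ω] {ι : Type*}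
    (P : ι → Measure Ω) (hP : ∀ i, IsProbabilityMeasure (P i))
    (V W : ℕ → Ω → ℝ)
    (hVconv : Tendsto (fun n : ℕ =>
        ⨆ i, ⨆ t : ℝ, |((P i) {ω | V n ω ≤ t}).toReal - stdGaussianCDF t|)
      atTop (nhds 0))
    (hWop : ∀ ε > 0,
      Tendsto (fun n : ℕ => ⨆ i, ((P i) {ω | ε < |W n ω - 1|}).toReal)
        atTop (nhds 0)) :
    Tendsto (fun n : ℕ =>
        ⨆ i, ⨆ t : ℝ, |((P i) {ω | V n ω / W n ω ≤ t}).toReal - stdGaussianCDF t|)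
      atTop (nhds 0) := by
  have := nullSingletonClass_gaussianReal (μ := 0) (v := 1) one_ne_zero
  simp_rw [stdGaussianCDF_eq_cdf, ← measureReal_def] at hVconv hWop ⊢
  have hle_one (i : ι) (s : Set Ω) : (P i).real s ≤ 1 := by
    have := hP i
    exact measureReal_le_one
  have hbound (i : ι) (s : Set Ω) (t : ℝ) : |(P i).real s - cdf (gaussianReal 0 1) t| ≤ 1 :=
    abs_sub_le_of_nonneg_of_le measureReal_nonneg (hle_one i s) (cdf_nonneg _ t) (cdf_le_one _ t)
  rw [tendsto_iSup_iSup_atTop_zero_iff (fun _ _ _ => abs_nonneg _) fun n i t => hbound i _ t]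
    at hVconv ⊢
  intro η hη
  obtain ⟨ε, hε0, hε1, hΦ⟩ :=
    (monotone_cdf (gaussianReal 0 1)).exists_relative_modulus_of_continuous (continuous_cdf _) (tendsto_cdf_atBot _) (tendsto_cdf_atTop _) (by positivity : 0 < η / 3)
  have hW := (tendsto_iSup_atTop_zero_iff (fun _ _ => measureReal_nonneg)
    fun _ i => hle_one i _).1 (hWop ε hε0) (η / 3) (by positivity)
  filter_upwards [hVconv (η / 3) (by positivity), hW] with n hVn hWn i t
  have := abs_measureReal_div_le_sub_le (P i) (W := W n) (monotone_cdf _) hε0.le hε1 (hVn i) t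
  linarith [hWn i, hΦ t]

/-- Uniform Slutsky lemma (ratio form): if `V n` is uniformly
asymptotically standard Gaussian over the family and `W n − 1 = o_𝒫(1)`, then
`V n / W n` is uniformly asymptotically standard Gaussian. -/
theorem uniform_slutsky_div
    {Ω : Type*} [MeasurableSpace Ω] {ι : Type*}
    (P : ι → Measure Ω) (hP : ∀ i, IsProbabilityMeasure (P i))
    (V W : ℕ → Ω → ℝ) (hV : ∀ n, Measurable (V n)) (hW : ∀ n, Measurable (W n))
    (hVconv : Tendsto (fun n : ℕ =>
        ⨆ i, ⨆ t : ℝ, |((P i) {ω | V n ω ≤ t}).toReal - stdGaussianCDF t|)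
      atTop (nhds 0))
    (hWop : ∀ ε > 0,
      Tendsto (fun n : ℕ => ⨆ i, ((P i) {ω | ε < |W n ω - 1|}).toReal)
        atTop (nhds 0)) :
    Tendsto (fun n : ℕ =>
        ⨆ i, ⨆ t : ℝ, |((P i) {ω | V n ω / W n ω ≤ t}).toReal - stdGaussianCDF t|)
      atTop (nhds 0) :=
  uniform_slutsky_div_general P hP V W hVconv hWop
end

section
/- Fix design points z_1,…,z_n in a set 𝒵 and suppose x_i = f(z_i) + ε_i where the ε_i have variance at most σ², are pairwise uncorrelated, and f lies in an RKHS ℋ with kernel k. Let K ∈ ℝ^{n×n} have entries K_{ij} = k(z_i, z_j)/n with eigenvalues μ̂_1 ≥ … ≥ μ̂_n ≥ 0, and let f̂_λ be the kernel ridge regression estimator with penalty λ‖h‖²_ℋ. Then (1/n) 𝔼[∑_{i=1}^n (f(z_i) − f̂_λ(z_i))²] ≤ (σ²/n) ∑_{i=1}^n μ̂_i²/(μ̂_i + λ)² + ‖f‖²_ℋ λ/4. -/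
open MeasureTheory Matrix
open scoped RealInnerProductSpace

/-!
Write `S = K (K + λ)⁻¹` and `F i = f (z i)`. The error `F - S x` splits into the deterministic
bias `F - S F` and the noise `S ε`; the cross term has mean zero and, the noise being
uncorrelated, `𝔼 ‖S ε‖² ≤ σ² ‖S‖_F²`, where `‖S‖_F² = ∑ μ̂ᵢ² / (μ̂ᵢ + λ)²` by the functional
calculus of `K`. For the bias, `F - S F = λ v` with `(K + λ) v = F`. Pairing with `v` and using
`F i = ⟪w_f, φ (z i)⟫` gives `‖s‖² / n + λ ‖v‖² ≤ ‖w_f‖ ‖s‖` for `s = ∑ vᵢ φ (z i)`, and AM-GM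
turns this into `λ ‖v‖² ≤ n ‖w_f‖² / 4`.
-/

section Uncorrelated

variable {Ω κ : Type*} [MeasurableSpace Ω] {μ : Measure Ω} [Fintype κ] {ε : Ω → κ → ℝ}

lemma integral_sum_mul_sq_of_uncorrelated (hL2 : ∀ j, MemLp (fun ω => ε ω j) 2 μ)
    (hcov : ∀ j k, j ≠ k → ∫ ω, ε ω j * ε ω k ∂μ = 0) (a : κ → ℝ) :
    ∫ ω, (∑ j, a j * ε ω j) ^ 2 ∂μ = ∑ j, a j ^ 2 * ∫ ω, ε ω j ^ 2 ∂μ := by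
  have hprod (j k : κ) : Integrable (fun ω => a j * a k * (ε ω j * ε ω k)) μ :=
    ((hL2 j).integrable_mul (hL2 k)).const_mul _
  have hexpand (ω : Ω) :
      (∑ j, a j * ε ω j) ^ 2 = ∑ j, ∑ k, a j * a k * (ε ω j * ε ω k) := by
    rw [sq, Finset.sum_mul_sum]
    exact Finset.sum_congr rfl fun j _ => Finset.sum_congr rfl fun k _ => by ring
  simp_rw [hexpand]
  rw [integral_finsetSum _ fun j _ => integrable_finsetSum _ fun k _ => hprod j k]
  refine Finset.sum_congr rfl fun j _ => ?_
  rw [integral_finsetSum _ fun k _ => hprod j k, Finset.sum_eq_single j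
    (fun k _ hkj => by rw [integral_const_mul, hcov j k hkj.symm, mul_zero])
    (fun hj => absurd (Finset.mem_univ j) hj), integral_const_mul]
  simp_rw [sq]

lemma integral_const_sub_sq_of_integral_eq_zero [IsProbabilityMeasure μ] {Y : Ω → ℝ}
    (hY : MemLp Y 2 μ) (hmean : ∫ ω, Y ω ∂μ = 0) (c : ℝ) :
    ∫ ω, (c - Y ω) ^ 2 ∂μ = c ^ 2 + ∫ ω, Y ω ^ 2 ∂μ := by
  have hexpand (ω : Ω) : (c - Y ω) ^ 2 = c ^ 2 - 2 * c * Y ω + Y ω ^ 2 := by ring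
  have hY1 : Integrable Y μ := hY.integrable one_le_two
  have hlin : Integrable (fun ω => c ^ 2 - 2 * c * Y ω) μ :=
    (integrable_const _).sub (hY1.const_mul _)
  simp_rw [hexpand]
  rw [integral_add hlin hY.integrable_sq, integral_sub (integrable_const _) (hY1.const_mul _),
    integral_const_mul, hmean]
  simp

lemma integral_sum_sq_sub_mulVec_of_uncorrelated [IsProbabilityMeasure μ] {ι : Type*} [Fintype ι]
    (hL2 : ∀ j, MemLp (fun ω => ε ω j) 2 μ) (hmean : ∀ j, ∫ ω, ε ω j ∂μ = 0)
    (hcov : ∀ j k, j ≠ k → ∫ ω, ε ω j * ε ω k ∂μ = 0) (A : Matrix ι κ ℝ) (b : ι → ℝ) :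
    ∫ ω, ∑ i, (b i - (A *ᵥ ε ω) i) ^ 2 ∂μ
      = ∑ i, b i ^ 2 + ∑ i, ∑ j, A i j ^ 2 * ∫ ω, ε ω j ^ 2 ∂μ := by
  have hrow (i : ι) : MemLp (fun ω => (A *ᵥ ε ω) i) 2 μ :=
    memLp_finsetSum _ fun j _ => (hL2 j).const_mul (A i j)
  have hrow_mean (i : ι) : ∫ ω, (A *ᵥ ε ω) i ∂μ = 0 := by
    simp only [mulVec, dotProduct]
    rw [integral_finsetSum _ fun j _ => ((hL2 j).integrable one_le_two).const_mul _]
    simp [integral_const_mul, hmean]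
  have hsq (i : ι) : Integrable (fun ω => (b i - (A *ᵥ ε ω) i) ^ 2) μ :=
    ((memLp_const (b i)).sub (hrow i)).integrable_sq
  rw [integral_finsetSum _ fun i _ => hsq i, ← Finset.sum_add_distrib]
  refine Finset.sum_congr rfl fun i _ => ?_
  rw [integral_const_sub_sq_of_integral_eq_zero (hrow i) (hrow_mean i)]
  exact congrArg _ (integral_sum_mul_sq_of_uncorrelated hL2 hcov (A i))

lemma integral_sum_sq_sub_mulVec_le_of_uncorrelated [IsProbabilityMeasure μ] {ι : Type*}
    [Fintype ι] {σ : ℝ} (hL2 : ∀ j, MemLp (fun ω => ε ω j) 2 μ) (hmean : ∀ j, ∫ ω, ε ω j ∂μ = 0)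
    (hvar : ∀ j, ∫ ω, ε ω j ^ 2 ∂μ ≤ σ ^ 2) (hcov : ∀ j k, j ≠ k → ∫ ω, ε ω j * ε ω k ∂μ = 0)
    (A : Matrix ι κ ℝ) (b : ι → ℝ) :
    ∫ ω, ∑ i, (b i - (A *ᵥ ε ω) i) ^ 2 ∂μ ≤ ∑ i, b i ^ 2 + σ ^ 2 * ∑ i, ∑ j, A i j ^ 2 := by
  rw [integral_sum_sq_sub_mulVec_of_uncorrelated hL2 hmean hcov, Finset.mul_sum]
  simp_rw [Finset.mul_sum, mul_comm (σ ^ 2)]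
  gcongr with i _ j _
  exact hvar j

end Uncorrelated

namespace Matrix

variable {n : Type*} [Fintype n] [DecidableEq n]

lemma IsHermitian.trace_cfc {𝕜 : Type*} [RCLike 𝕜] {A : Matrix n n 𝕜} (hA : A.IsHermitian)
    (f : ℝ → ℝ) : (cfc f A).trace = ∑ i, (f (hA.eigenvalues i) : 𝕜) := by
  rw [hA.cfc_eq, IsHermitian.cfc, Unitary.conjStarAlgAut_apply, trace_mul_cycle,
    Unitary.coe_star_mul_self, one_mul, trace_diagonal]
  rfl

omit [DecidableEq n] in
lemma sum_sum_sq_eq_trace_transpose_mul {m : Type*} [Fintype m] (M : Matrix m n ℝ) :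
    ∑ i, ∑ j, M i j ^ 2 = (Mᵀ * M).trace := by
  simp only [trace, diag, mul_apply, transpose_apply, sq]
  exact Finset.sum_comm

noncomputable def ridgeSmoother (A : Matrix n n ℝ) (lam : ℝ) : Matrix n n ℝ := A * (A + lam • 1)⁻¹

lemma PosSemidef.isUnit_det_add_smul_one {A : Matrix n n ℝ} (hA : A.PosSemidef) {lam : ℝ}
    (hlam : 0 < lam) : IsUnit (A + lam • 1).det :=
  (isUnit_iff_isUnit_det _).mp (PosDef.posSemidef_add hA (PosDef.one.smul hlam)).isUnit

lemma PosSemidef.ridgeSmoother_eq_cfc {A : Matrix n n ℝ} (hA : A.PosSemidef) {lam : ℝ}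
    (hlam : 0 < lam) : ridgeSmoother A lam = cfc (fun x => x / (x + lam)) A := by
  have hshift : ∀ x ∈ spectrum ℝ A, x + lam ≠ 0 := by
    intro x hx
    obtain ⟨i, rfl⟩ := hA.isHermitian.spectrum_real_eq_range_eigenvalues ▸ hx
    exact (add_pos_of_nonneg_of_pos (hA.eigenvalues_nonneg i) hlam).ne'
  have hsa : IsSelfAdjoint A := hA.isHermitian
  have hcont (g : ℝ → ℝ) : ContinuousOn g (spectrum ℝ A) := (Set.toFinite _).continuousOn g
  have hshifted : A + lam • 1 = cfc (fun x => x + lam) A := by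
    rw [cfc_add_const lam _ A (hcont _) hsa, cfc_id' ℝ A hsa, Algebra.algebraMap_eq_smul_one]
  have hinv : (A + lam • 1)⁻¹ = cfc (fun x => (x + lam)⁻¹) A := by
    refine inv_eq_right_inv ?_
    rw [hshifted, ← cfc_mul _ _ A (hcont _) (hcont _), ← cfc_one ℝ A]
    exact cfc_congr fun x hx => mul_inv_cancel₀ (hshift x hx)
  simp_rw [ridgeSmoother, hinv, div_eq_mul_inv]
  nth_rw 1 [← cfc_id' ℝ A hsa]
  exact (cfc_mul _ _ A (hcont _) (hcont _)).symm

lemma PosSemidef.sum_sum_sq_ridgeSmoother {A : Matrix n n ℝ} (hA : A.PosSemidef) {lam : ℝ}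
    (hlam : 0 < lam) :
    ∑ i, ∑ j, ridgeSmoother A lam i j ^ 2
      = ∑ i, hA.isHermitian.eigenvalues i ^ 2 / (hA.isHermitian.eigenvalues i + lam) ^ 2 := by
  have hcont (g : ℝ → ℝ) : ContinuousOn g (spectrum ℝ A) := (Set.toFinite _).continuousOn g
  have hsymm : (cfc (fun x => x / (x + lam)) A)ᵀ = cfc (fun x => x / (x + lam)) A := by
    rw [← conjTranspose_eq_transpose_of_trivial]
    exact IsSelfAdjoint.star_eq (cfc_predicate _ A)
  rw [sum_sum_sq_eq_trace_transpose_mul, hA.ridgeSmoother_eq_cfc hlam, hsymm,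
    ← cfc_mul _ _ A (hcont _) (hcont _), hA.isHermitian.trace_cfc]
  exact Finset.sum_congr rfl fun i _ => by simp [div_mul_div_comm, sq]

lemma mul_inv_add_smul_one_eq_one_sub {R : Type*} [CommRing R] {A : Matrix n n R} {lam : R}
    (h : IsUnit (A + lam • 1).det) : A * (A + lam • 1)⁻¹ = 1 - lam • (A + lam • 1)⁻¹ := by
  calc A * (A + lam • 1)⁻¹ = (A + lam • 1 - lam • 1) * (A + lam • 1)⁻¹ := by
        rw [add_sub_cancel_right]
    _ = 1 - lam • (A + lam • 1)⁻¹ := by rw [sub_mul, mul_nonsing_inv _ h, smul_mul, one_mul]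

section Gram

variable {H : Type*} [NormedAddCommGroup H] [InnerProductSpace ℝ H]

lemma sum_sq_smul_le_of_gram_add_smul_one_mulVec_eq (u : n → H) (w : H) {c lam : ℝ}
    (hc : 0 < c) (hlam : 0 ≤ lam) {v : n → ℝ}
    (hv : (c⁻¹ • gram ℝ u + lam • 1) *ᵥ v = fun i => ⟪w, u i⟫) :
    c⁻¹ * ∑ i, (lam * v i) ^ 2 ≤ ‖w‖ ^ 2 * lam / 4 := by
  set s := ∑ i, v i • u i
  have hgram : v ⬝ᵥ (gram ℝ u *ᵥ v) = ‖s‖ ^ 2 := by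
    simpa [real_inner_self_eq_norm_sq] using star_dotProduct_gram_mulVec (𝕜 := ℝ) u v v
  have hpair : v ⬝ᵥ (fun i => ⟪w, u i⟫) = ⟪w, s⟫ := by
    simp [s, dotProduct, inner_sum, real_inner_smul_right]
  have hkey : c⁻¹ * ‖s‖ ^ 2 + lam * (v ⬝ᵥ v) ≤ ‖w‖ * ‖s‖ := by
    calc c⁻¹ * ‖s‖ ^ 2 + lam * (v ⬝ᵥ v) = v ⬝ᵥ ((c⁻¹ • gram ℝ u + lam • 1) *ᵥ v) := by
          simp only [add_mulVec, smul_mulVec, one_mulVec, dotProduct_add, dotProduct_smul, hgram,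
            smul_eq_mul]
      _ ≤ ‖w‖ * ‖s‖ := hv ▸ hpair ▸ real_inner_le_norm w s
  -- AM-GM: `‖w‖ ‖s‖ - ‖s‖² / c ≤ c ‖w‖² / 4`, as `(c ‖w‖ - 2 ‖s‖)² ≥ 0`
  have hvv : lam * (v ⬝ᵥ v) ≤ c * ‖w‖ ^ 2 / 4 := by
    have : c * (c⁻¹ * ‖s‖ ^ 2) = ‖s‖ ^ 2 := by field_simp
    nlinarith [sq_nonneg (c * ‖w‖ - 2 * ‖s‖)]
  calc c⁻¹ * ∑ i, (lam * v i) ^ 2 = c⁻¹ * lam * (lam * (v ⬝ᵥ v)) := by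
        simp only [dotProduct, Finset.mul_sum]
        exact Finset.sum_congr rfl fun i _ => by ring
    _ ≤ c⁻¹ * lam * (c * ‖w‖ ^ 2 / 4) := by gcongr
    _ = ‖w‖ ^ 2 * lam / 4 := by field_simp

lemma sum_sq_sub_ridgeSmoother_gram_mulVec_le (u : n → H) (w : H) {c lam : ℝ} (hc : 0 < c)
    (hlam : 0 < lam) :
    c⁻¹ * ∑ i, ((fun i => ⟪w, u i⟫) - ridgeSmoother (c⁻¹ • gram ℝ u) lam *ᵥ fun i => ⟪w, u i⟫) i ^ 2
      ≤ ‖w‖ ^ 2 * lam / 4 := by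
  have hdet := ((posSemidef_gram ℝ u).smul (inv_nonneg.mpr hc.le)).isUnit_det_add_smul_one hlam
  rw [ridgeSmoother, mul_inv_add_smul_one_eq_one_sub hdet, sub_mulVec, one_mulVec, sub_sub_cancel,
    smul_mulVec]
  refine sum_sq_smul_le_of_gram_add_smul_one_mulVec_eq u w hc hlam.le ?_
  rw [mulVec_mulVec, mul_nonsing_inv _ hdet, one_mulVec]

end Gram

end Matrix

/-- Fixed-design kernel ridge regression bound.  The RKHS is
represented via a feature map `φ : 𝒵 → H` into a real Hilbert space, the
regression function is `f z = ⟪wf, φ z⟫` with `‖f‖_ℋ = ‖wf‖`, the kernel is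
`k z z' = ⟪φ z, φ z'⟫`, and by the representer theorem the kernel ridge
regression fitted values are `K (K + λ I)⁻¹ X` where `K_{ij} = k(z_i,z_j)/n`.
Then the expected in-sample mean squared error is bounded by the variance term
`(σ²/n) ∑ μ̂ᵢ²/(μ̂ᵢ+λ)²` plus the bias term `‖f‖²_ℋ λ/4`. -/
theorem kernel_ridge_regression_bound
    {Ω : Type*} [MeasurableSpace Ω] (μ : Measure Ω) [IsProbabilityMeasure μ]
    {𝒵 : Type*} {H : Type*} [NormedAddCommGroup H] [InnerProductSpace ℝ H]
    (n : ℕ) (hn : 0 < n) (z : Fin n → 𝒵) (φ : 𝒵 → H) (wf : H)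
    (f : 𝒵 → ℝ) (hf : ∀ zz, f zz = ⟪wf, φ zz⟫)
    (ε : Ω → Fin n → ℝ) (x : Ω → Fin n → ℝ)
    (hx : ∀ ω i, x ω i = f (z i) + ε ω i)
    (σ : ℝ)
    (hmeanzero : ∀ i, ∫ ω, ε ω i ∂μ = 0)
    (hvar : ∀ i, ∫ ω, (ε ω i) ^ 2 ∂μ ≤ σ ^ 2)
    (hcov : ∀ i j, i ≠ j → ∫ ω, ε ω i * ε ω j ∂μ = 0)
    (hL2 : ∀ i, MemLp (fun ω => ε ω i) 2 μ)
    (K : Matrix (Fin n) (Fin n) ℝ)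
    (hK : ∀ i j, K i j = ⟪φ (z i), φ (z j)⟫ / n)
    (hKherm : K.IsHermitian)
    (lam : ℝ) (hlam : 0 < lam)
    (fhat : Ω → Fin n → ℝ)
    (hfhat : ∀ ω, fhat ω = (K * (K + lam • (1 : Matrix (Fin n) (Fin n) ℝ))⁻¹).mulVec (x ω)) :
    (1 / n) * ∫ ω, ∑ i, (f (z i) - fhat ω i) ^ 2 ∂μ ≤
      (σ ^ 2 / n) * ∑ i, (hKherm.eigenvalues i) ^ 2 / (hKherm.eigenvalues i + lam) ^ 2
        + ‖wf‖ ^ 2 * lam / 4 := by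
  set F : Fin n → ℝ := fun i => f (z i)
  have hF : F = fun i => ⟪wf, (φ ∘ z) i⟫ := funext fun i => hf (z i)
  have hKgram : K = (n : ℝ)⁻¹ • gram ℝ (φ ∘ z) := by
    ext i j
    simp [hK, div_eq_inv_mul]
  have hKpsd : K.PosSemidef := hKgram ▸ (posSemidef_gram ℝ _).smul (by positivity)
  have hbias : (1 / n) * ∑ i, (F - ridgeSmoother K lam *ᵥ F) i ^ 2 ≤ ‖wf‖ ^ 2 * lam / 4 := by
    rw [one_div, hF, hKgram]
    exact sum_sq_sub_ridgeSmoother_gram_mulVec_le (φ ∘ z) wf (by positivity) hlam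
  have hfrob : ∑ i, ∑ j, ridgeSmoother K lam i j ^ 2
      = ∑ i, hKherm.eigenvalues i ^ 2 / (hKherm.eigenvalues i + lam) ^ 2 :=
    hKpsd.sum_sum_sq_ridgeSmoother hlam
  set S := ridgeSmoother K lam
  have herror (ω : Ω) (i : Fin n) : f (z i) - fhat ω i = (F - S *ᵥ F) i - (S *ᵥ ε ω) i := by
    rw [hfhat, show x ω = F + ε ω from funext (hx ω), mulVec_add]
    simp only [Pi.add_apply, Pi.sub_apply, S, ridgeSmoother, F]
    ring
  have hmse : ∫ ω, ∑ i, (f (z i) - fhat ω i) ^ 2 ∂μ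
      ≤ ∑ i, (F - S *ᵥ F) i ^ 2 + σ ^ 2 * ∑ i, ∑ j, S i j ^ 2 := by
    simp_rw [herror]
    exact integral_sum_sq_sub_mulVec_le_of_uncorrelated hL2 hmeanzero hvar hcov S _
  calc _ ≤ (1 / n) * (∑ i, (F - S *ᵥ F) i ^ 2 + σ ^ 2 * ∑ i, ∑ j, S i j ^ 2) := by gcongr
    _ = σ ^ 2 / n * ∑ i, ∑ j, S i j ^ 2 + (1 / n) * ∑ i, (F - S *ᵥ F) i ^ 2 := by ring
    _ ≤ _ := by rw [hfrob]; gcongr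
end
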